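/- Let J ⊆ ℝ be an interval, F : J → ℝ twice continuously differentiable, ω : J → ℝ continuous, and let x₁, x₂ : J → ℝ be twice differentiable positive functions each solving the dissipative Milne–Pinney equation ẍ = −F'(t)ẋ + ω²(t)x + e^{−2F(t)}x^{−3} on J. Let I denote the (constant) value of e^{2F(t)}(x₁ẋ₂ − x₂ẋ₁)² + (x₁/x₂)² + (x₂/x₁)² on J, and let k₁, k₂ ∈ ℝ be such that I² ≠ 4, set λ₁₂ = (k₁k₂I + k₁² + k₂² − 1)/(I² − 4), and assume that for all t ∈ J both λ₁₂(−(x₁⁴(t) + x₂⁴(t)) + I x₁²(t)x₂²(t)) > 0 and k₁x₁²(t) + k₂x₂²(t) + 2√(λ₁₂(−(x₁⁴(t)+x₂⁴(t)) + I x₁²(t)x₂²(t))) > 0. Then x(t) := √(k₁x₁²(t) + k₂x₂²(t) + 2√(λ₁₂(−(x₁⁴(t)+x₂⁴(t)) + I x₁²(t)x₂²(t)))) is twice differentiable and also solves ẍ = −F'(t)ẋ + ω²(t)x + e^{−2F(t)}x^{−3} on J. (This is the common time-dependent superposition rule for the Lie family of dissipative Milne–Pinney equations.) -/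

import Mathlib

/-!
Work with 2-jets `(y, ẏ, ÿ)` at a point and the symmetric bilinear form (`Jet.pinneyForm`)
`B(y, z) = y L z + z L y - ẏ ż`, where `L y = ÿ + f ẏ - 2 w² y` (`Jet.linOp`) and `f = F'`,
`w = ω`, `E = e^{-2F}` are frozen at that point. A positive `y` is the square of a solution
exactly when `B(y, y) = 4E`. For `y₁ = x₁²`, `y₂ = x₂²` one computes `B(yᵢ, yᵢ) = 4E` and
`B(y₁, y₂) = 2EI`, which forces the Wronskian identity `(y₁ẏ₂ - y₂ẏ₁)² = 4EP` with
`P = I y₁y₂ - y₁² - y₂²`. From it, `z = √(λP)` is `B`-orthogonal to `y₁` and `y₂` and has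
`B(z, z) = -λE(I² - 4)`, so `B(k₁y₁ + k₂y₂ + 2z) = 4E(k₁² + k₂² + k₁k₂I - λ(I² - 4)) = 4E`
by the choice of `λ`.
-/

/-- The square of the common time-dependent superposition rule for dissipative Milne–Pinney
equations. -/
noncomputable def mpSupSq (k₁ k₂ I lam : ℝ) (x₁ x₂ : ℝ → ℝ) (t : ℝ) : ℝ :=
  k₁ * (x₁ t) ^ 2 + k₂ * (x₂ t) ^ 2
    + 2 * Real.sqrt (lam * (-((x₁ t) ^ 4 + (x₂ t) ^ 4) + I * (x₁ t) ^ 2 * (x₂ t) ^ 2))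

/-- `d2` is the second derivative itself, so the product below is the Leibniz rule and not the
multiplication of truncated Taylor polynomials. -/
@[ext] structure Jet where
  val : ℝ
  d1 : ℝ
  d2 : ℝ

namespace Jet

@[simps] instance : Add Jet := ⟨fun p q => ⟨p.val + q.val, p.d1 + q.d1, p.d2 + q.d2⟩⟩
@[simps] instance : Sub Jet := ⟨fun p q => ⟨p.val - q.val, p.d1 - q.d1, p.d2 - q.d2⟩⟩
@[simps] instance : SMul ℝ Jet := ⟨fun c p => ⟨c * p.val, c * p.d1, c * p.d2⟩⟩
@[simps] instance : Mul Jet :=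
  ⟨fun p q => ⟨p.val * q.val, p.d1 * q.val + p.val * q.d1,
    p.d2 * q.val + 2 * (p.d1 * q.d1) + p.val * q.d2⟩⟩

@[simps] noncomputable def sqrt (p : Jet) : Jet :=
  ⟨√p.val, p.d1 / (2 * √p.val), (p.d2 - p.d1 ^ 2 / (2 * p.val)) / (2 * √p.val)⟩

def ermakovQuad (I : ℝ) (p q : Jet) : Jet := I • (p * q) - (p * p + q * q)

noncomputable def superpose (I k₁ k₂ lam : ℝ) (p q : Jet) : Jet :=
  k₁ • p + k₂ • q + (2 : ℝ) • (lam • ermakovQuad I p q).sqrt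

lemma ermakovQuad_comm (I : ℝ) (p q : Jet) : ermakovQuad I p q = ermakovQuad I q p := by
  ext <;> simp only [ermakovQuad, sub_val, smul_val, mul_val, add_val, sub_d1, smul_d1, mul_d1,
    add_d1, sub_d2, smul_d2, mul_d2, add_d2] <;> ring

lemma ermakovQuad_mul_self_val (I : ℝ) (p q : Jet) :
    (ermakovQuad I (p * p) (q * q)).val = -(p.val ^ 4 + q.val ^ 4) + I * p.val ^ 2 * q.val ^ 2 := by
  simp only [ermakovQuad, sub_val, smul_val, mul_val, add_val]; ring

lemma superpose_mul_self_val (I k₁ k₂ lam : ℝ) (p q : Jet) :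
    (superpose I k₁ k₂ lam (p * p) (q * q)).val = k₁ * p.val ^ 2 + k₂ * q.val ^ 2
      + 2 * √(lam * (-(p.val ^ 4 + q.val ^ 4) + I * p.val ^ 2 * q.val ^ 2)) := by
  simp only [superpose, add_val, smul_val, sqrt_val, ermakovQuad_mul_self_val, mul_val]; ring

lemma ermakovQuad_lagrange (I : ℝ) (p q : Jet) :
    4 * (ermakovQuad I p q).val * (I * (p.d1 * q.d1) - p.d1 ^ 2 - q.d1 ^ 2)
        - (ermakovQuad I p q).d1 ^ 2
      = (4 - I ^ 2) * (p.val * q.d1 - q.val * p.d1) ^ 2 := by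
  simp only [ermakovQuad, sub_val, smul_val, mul_val, add_val, sub_d1, smul_d1, mul_d1, add_d1]
  ring

/-- `j t` is the 2-jet at `t` of `fun u => (j u).val`, with derivatives taken within `s`. -/
def IsJetOn (j : ℝ → Jet) (s : Set ℝ) : Prop :=
  ∀ t ∈ s, HasDerivWithinAt (fun u => (j u).val) (j t).d1 s t
    ∧ HasDerivWithinAt (fun u => (j u).d1) (j t).d2 s t

namespace IsJetOn

variable {j k : ℝ → Jet} {s : Set ℝ}

lemma add (hj : IsJetOn j s) (hk : IsJetOn k s) : IsJetOn (fun t => j t + k t) s :=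
  fun t ht => ⟨(hj t ht).1.add (hk t ht).1, (hj t ht).2.add (hk t ht).2⟩

lemma sub (hj : IsJetOn j s) (hk : IsJetOn k s) : IsJetOn (fun t => j t - k t) s :=
  fun t ht => ⟨(hj t ht).1.sub (hk t ht).1, (hj t ht).2.sub (hk t ht).2⟩

lemma const_smul (c : ℝ) (hj : IsJetOn j s) : IsJetOn (fun t => c • j t) s :=
  fun t ht => ⟨(hj t ht).1.const_mul c, (hj t ht).2.const_mul c⟩

lemma mul (hj : IsJetOn j s) (hk : IsJetOn k s) : IsJetOn (fun t => j t * k t) s := by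
  intro t ht
  obtain ⟨hj₁, hj₂⟩ := hj t ht
  obtain ⟨hk₁, hk₂⟩ := hk t ht
  refine ⟨hj₁.mul hk₁, ((hj₂.mul hk₁).add (hj₁.mul hk₂)).congr_deriv ?_⟩
  simp only [mul_d2]; ring

lemma sqrt (hj : IsJetOn j s) (hpos : ∀ t ∈ s, 0 < (j t).val) :
    IsJetOn (fun t => (j t).sqrt) s := by
  intro t ht
  obtain ⟨hj₁, hj₂⟩ := hj t ht
  have hv := hpos t ht
  have hs0 : √(j t).val ≠ 0 := (Real.sqrt_pos.2 hv).ne'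
  have hsqrt := hj₁.sqrt hv.ne'
  refine ⟨hsqrt, (hj₂.div (hsqrt.const_mul 2) (by positivity)).congr_deriv ?_⟩
  simp only [sqrt_d2]
  field_simp
  rw [Real.sq_sqrt hv.le]
  ring

lemma superpose (I k₁ k₂ lam : ℝ) (hj : IsJetOn j s) (hk : IsJetOn k s)
    (hpos : ∀ t ∈ s, 0 < (lam • ermakovQuad I (j t) (k t)).val) :
    IsJetOn (fun t => Jet.superpose I k₁ k₂ lam (j t) (k t)) s :=
  ((hj.const_smul k₁).add (hk.const_smul k₂)).add
    (((((hj.mul hk).const_smul I).sub ((hj.mul hj).add (hk.mul hk))).const_smul lam).sqrt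
      hpos |>.const_smul 2)

end IsJetOn

section PinneyForm

variable (f w : ℝ)

def linOp (p : Jet) : ℝ := p.d2 + f * p.d1 - 2 * w ^ 2 * p.val

def pinneyForm (p q : Jet) : ℝ := p.val * linOp f w q + q.val * linOp f w p - p.d1 * q.d1

def IsMPSol (E : ℝ) (p : Jet) : Prop := p.d2 = -f * p.d1 + w ^ 2 * p.val + E * (p.val ^ 3)⁻¹

variable {f w}

lemma pinneyForm_comm (p q : Jet) : pinneyForm f w p q = pinneyForm f w q p := by
  unfold pinneyForm; ring

lemma pinneyForm_sqrt_self {g : Jet} (hg : 0 < g.val) :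
    pinneyForm f w g.sqrt g.sqrt
      = linOp f w g - 2 * w ^ 2 * g.val - 3 * g.d1 ^ 2 / (4 * g.val) := by
  have hs0 : √g.val ≠ 0 := (Real.sqrt_pos.2 hg).ne'
  simp only [pinneyForm, linOp, sqrt_val, sqrt_d1, sqrt_d2]
  field_simp
  rw [Real.sq_sqrt hg.le]; ring

lemma mul_pinneyForm_sqrt (p : Jet) {g : Jet} (hg : 0 < g.val) :
    2 * √g.val * pinneyForm f w p g.sqrt = p.val * (linOp f w g - 2 * w ^ 2 * g.val)
      - p.val * g.d1 ^ 2 / (2 * g.val) + 2 * g.val * linOp f w p - p.d1 * g.d1 := by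
  have hs0 : √g.val ≠ 0 := (Real.sqrt_pos.2 hg).ne'
  simp only [pinneyForm, linOp, sqrt_val, sqrt_d1, sqrt_d2]
  field_simp
  rw [Real.sq_sqrt hg.le]; ring

lemma isMPSol_sqrt {E : ℝ} {g : Jet} (hg : 0 < g.val) (hE : pinneyForm f w g g = 4 * E) :
    IsMPSol f w E g.sqrt := by
  have hs0 : √g.val ≠ 0 := (Real.sqrt_pos.2 hg).ne'
  unfold IsMPSol pinneyForm linOp at *
  simp only [sqrt_val, sqrt_d1, sqrt_d2]
  field_simp
  rw [Real.sq_sqrt hg.le]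
  linear_combination g.val * hE

lemma pinneyForm_mul_self_of_isMPSol {E : ℝ} {x : Jet} (hx : IsMPSol f w E x) (hx0 : x.val ≠ 0) :
    pinneyForm f w (x * x) (x * x) = 4 * E := by
  unfold IsMPSol at hx
  simp only [pinneyForm, linOp, mul_val, mul_d1, mul_d2, hx]
  field_simp
  ring

lemma pinneyForm_mul_self_mul_self_of_isMPSol {E : ℝ} {x y : Jet} (hx : IsMPSol f w E x)
    (hy : IsMPSol f w E y) (hx0 : x.val ≠ 0) (hy0 : y.val ≠ 0) :
    pinneyForm f w (x * x) (y * y) = 2 * (x.val * y.d1 - y.val * x.d1) ^ 2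
      + 2 * E * ((x.val / y.val) ^ 2 + (y.val / x.val) ^ 2) := by
  unfold IsMPSol at hx hy
  simp only [pinneyForm, linOp, mul_val, mul_d1, mul_d2, hx, hy]
  field_simp
  ring

lemma linOp_ermakovQuad_sub (I : ℝ) (p q : Jet) :
    linOp f w (ermakovQuad I p q) - 2 * w ^ 2 * (ermakovQuad I p q).val =
      I * (pinneyForm f w p q + 3 * (p.d1 * q.d1))
        - (pinneyForm f w p p + 3 * p.d1 ^ 2 + (pinneyForm f w q q + 3 * q.d1 ^ 2)) := by
  simp only [ermakovQuad, linOp, pinneyForm, sub_val, smul_val, mul_val, add_val, sub_d1, smul_d1,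
    mul_d1, add_d1, sub_d2, smul_d2, mul_d2, add_d2]
  ring

section Gram

variable {E I : ℝ} {p q : Jet} (hp : pinneyForm f w p p = 4 * E)
  (hq : pinneyForm f w q q = 4 * E) (hpq : pinneyForm f w p q = 2 * E * I)
include hp hq hpq

lemma sq_wronskian : (p.val * q.d1 - q.val * p.d1) ^ 2 = 4 * E * (ermakovQuad I p q).val := by
  simp only [pinneyForm] at hp hq hpq
  simp only [ermakovQuad, sub_val, smul_val, mul_val, add_val]
  linear_combination (-q.val ^ 2) * hp + (-p.val ^ 2) * hq + 2 * p.val * q.val * hpq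

lemma pinneyForm_sqrt_ermakovQuad_self (lam : ℝ) (hG : 0 < (lam • ermakovQuad I p q).val) :
    pinneyForm f w (lam • ermakovQuad I p q).sqrt (lam • ermakovQuad I p q).sqrt
      = -(lam * E * (I ^ 2 - 4)) := by
  have hD := sq_wronskian hp hq hpq
  have hL := linOp_ermakovQuad_sub (f := f) (w := w) I p q
  rw [hp, hq, hpq] at hL
  have hlam : lam ≠ 0 := by rintro rfl; simp at hG
  have hP : (ermakovQuad I p q).val ≠ 0 := by rintro h; simp [h] at hG
  rw [pinneyForm_sqrt_self hG]
  simp only [linOp, smul_val, smul_d1, smul_d2] at hL ⊢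
  field_simp
  linear_combination 4 * (ermakovQuad I p q).val * hL + 3 * ermakovQuad_lagrange I p q
    + 3 * (4 - I ^ 2) * hD

lemma pinneyForm_sqrt_ermakovQuad (lam : ℝ) (hG : 0 < (lam • ermakovQuad I p q).val)
    (hp0 : p.val ≠ 0) : pinneyForm f w p (lam • ermakovQuad I p q).sqrt = 0 := by
  have hD := sq_wronskian hp hq hpq
  have hL := linOp_ermakovQuad_sub (f := f) (w := w) I p q
  rw [hp, hq, hpq] at hL
  have hlam : lam ≠ 0 := by rintro rfl; simp at hG
  have hP : (ermakovQuad I p q).val ≠ 0 := by rintro h; simp [h] at hG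
  refine (mul_eq_zero.1 ?_).resolve_left (by positivity : 2 * √(lam • ermakovQuad I p q).val ≠ 0)
  rw [mul_pinneyForm_sqrt p hG]
  simp only [pinneyForm] at hp
  simp only [linOp, smul_val, smul_d1, smul_d2] at hL hp ⊢
  field_simp
  refine mul_left_cancel₀ hp0 ?_
  simp only [ermakovQuad, sub_val, smul_val, mul_val, add_val, sub_d1, smul_d1, mul_d1, add_d1,
    sub_d2, smul_d2, mul_d2, add_d2] at hL hD ⊢
  -- besides the Gram relations, the certificate uses `p Ṗ - 2 P ṗ = (I p - 2 q) (p q̇ - q ṗ)`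
  linear_combination lam * (2 * (I * (p.val * q.val) - (p.val * p.val + q.val * q.val)) * p.val ^ 2 * hL
    + 2 * (I * (p.val * q.val) - (p.val * p.val + q.val * q.val)) ^ 2 * hp
    + (3 / 2 * p.val ^ 2 * (4 - I ^ 2) + (I * p.val - 2 * q.val) ^ 2 / 2) * hD)

lemma pinneyForm_superpose_self (k₁ k₂ lam : ℝ) (hG : 0 < (lam • ermakovQuad I p q).val)
    (hp0 : p.val ≠ 0) (hq0 : q.val ≠ 0)
    (hlam : lam * (I ^ 2 - 4) = k₁ * k₂ * I + k₁ ^ 2 + k₂ ^ 2 - 1) :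
    pinneyForm f w (superpose I k₁ k₂ lam p q) (superpose I k₁ k₂ lam p q) = 4 * E := by
  have hpZ := pinneyForm_sqrt_ermakovQuad hp hq hpq lam hG hp0
  have hqZ := pinneyForm_sqrt_ermakovQuad hq hp (pinneyForm_comm p q ▸ hpq) lam
    (ermakovQuad_comm I p q ▸ hG) hq0
  rw [ermakovQuad_comm] at hqZ
  have hZZ := pinneyForm_sqrt_ermakovQuad_self hp hq hpq lam hG
  simp only [superpose, pinneyForm, linOp, add_val, add_d1, add_d2, smul_val, smul_d1, smul_d2]
    at hp hq hpq hpZ hqZ hZZ ⊢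
  linear_combination k₁ ^ 2 * hp + k₂ ^ 2 * hq + 2 * k₁ * k₂ * hpq + 4 * k₁ * hpZ + 4 * k₂ * hqZ
    + 4 * hZZ - 4 * E * hlam

end Gram

lemma isMPSol_sqrt_superpose {E I k₁ k₂ lam : ℝ} {x y : Jet} (hx : IsMPSol f w E x)
    (hy : IsMPSol f w E y) (hx0 : x.val ≠ 0) (hy0 : y.val ≠ 0)
    (hI : (x.val * y.d1 - y.val * x.d1) ^ 2 + E * ((x.val / y.val) ^ 2 + (y.val / x.val) ^ 2)
      = E * I)
    (hlam : lam * (I ^ 2 - 4) = k₁ * k₂ * I + k₁ ^ 2 + k₂ ^ 2 - 1)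
    (hG : 0 < (lam • ermakovQuad I (x * x) (y * y)).val)
    (hY : 0 < (superpose I k₁ k₂ lam (x * x) (y * y)).val) :
    IsMPSol f w E (superpose I k₁ k₂ lam (x * x) (y * y)).sqrt := by
  have hxy : pinneyForm f w (x * x) (y * y) = 2 * E * I := by
    rw [pinneyForm_mul_self_mul_self_of_isMPSol hx hy hx0 hy0]
    linear_combination 2 * hI
  exact isMPSol_sqrt hY <| pinneyForm_superpose_self (pinneyForm_mul_self_of_isMPSol hx hx0)
    (pinneyForm_mul_self_of_isMPSol hy hy0) hxy k₁ k₂ lam hG (mul_ne_zero hx0 hx0)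
    (mul_ne_zero hy0 hy0) hlam

end PinneyForm

end Jet

open Jet

theorem mp_superposition_rule_general (J : Set ℝ)
    (F : ℝ → ℝ) (ω : ℝ → ℝ)
    (x₁ x₂ v₁ v₂ : ℝ → ℝ)
    (hx₁ : ∀ t ∈ J, 0 < x₁ t) (hx₂ : ∀ t ∈ J, 0 < x₂ t)
    (hx₁' : ∀ t ∈ J, HasDerivWithinAt x₁ (v₁ t) J t)
    (hx₂' : ∀ t ∈ J, HasDerivWithinAt x₂ (v₂ t) J t)
    (hv₁' : ∀ t ∈ J, HasDerivWithinAt v₁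
      (-(deriv F t) * v₁ t + (ω t) ^ 2 * x₁ t + Real.exp (-(2 * F t)) * ((x₁ t) ^ 3)⁻¹) J t)
    (hv₂' : ∀ t ∈ J, HasDerivWithinAt v₂
      (-(deriv F t) * v₂ t + (ω t) ^ 2 * x₂ t + Real.exp (-(2 * F t)) * ((x₂ t) ^ 3)⁻¹) J t)
    (I : ℝ)
    (hI : ∀ t ∈ J,
      Real.exp (2 * F t) * (x₁ t * v₂ t - x₂ t * v₁ t) ^ 2
        + (x₁ t / x₂ t) ^ 2 + (x₂ t / x₁ t) ^ 2 = I)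
    (k₁ k₂ lam : ℝ) (hI4 : I ^ 2 ≠ 4)
    (hlam : lam = (k₁ * k₂ * I + k₁ ^ 2 + k₂ ^ 2 - 1) / (I ^ 2 - 4))
    (hpos₁ : ∀ t ∈ J,
      0 < lam * (-((x₁ t) ^ 4 + (x₂ t) ^ 4) + I * (x₁ t) ^ 2 * (x₂ t) ^ 2))
    (hpos₂ : ∀ t ∈ J, 0 < mpSupSq k₁ k₂ I lam x₁ x₂ t) :
    ∃ xd : ℝ → ℝ,
      (∀ t ∈ J, HasDerivWithinAt
        (fun s => Real.sqrt (mpSupSq k₁ k₂ I lam x₁ x₂ s)) (xd t) J t)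
      ∧ (∀ t ∈ J, HasDerivWithinAt xd
          (-(deriv F t) * xd t + (ω t) ^ 2 * Real.sqrt (mpSupSq k₁ k₂ I lam x₁ x₂ t)
            + Real.exp (-(2 * F t)) * ((Real.sqrt (mpSupSq k₁ k₂ I lam x₁ x₂ t)) ^ 3)⁻¹)
          J t) := by
  let X₁ : ℝ → Jet := fun t =>
    ⟨x₁ t, v₁ t, -(deriv F t) * v₁ t + (ω t) ^ 2 * x₁ t + Real.exp (-(2 * F t)) * ((x₁ t) ^ 3)⁻¹⟩
  let X₂ : ℝ → Jet := fun t =>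
    ⟨x₂ t, v₂ t, -(deriv F t) * v₂ t + (ω t) ^ 2 * x₂ t + Real.exp (-(2 * F t)) * ((x₂ t) ^ 3)⁻¹⟩
  let Y : ℝ → Jet := fun t => superpose I k₁ k₂ lam (X₁ t * X₁ t) (X₂ t * X₂ t)
  have hG (t : ℝ) (ht : t ∈ J) : 0 < (lam • ermakovQuad I (X₁ t * X₁ t) (X₂ t * X₂ t)).val := by
    simpa only [smul_val, ermakovQuad_mul_self_val] using hpos₁ t ht
  have hY_val (t : ℝ) : (Y t).val = mpSupSq k₁ k₂ I lam x₁ x₂ t := superpose_mul_self_val ..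
  have hX₁ : IsJetOn X₁ J := fun t ht => ⟨hx₁' t ht, hv₁' t ht⟩
  have hX₂ : IsJetOn X₂ J := fun t ht => ⟨hx₂' t ht, hv₂' t ht⟩
  have hY : IsJetOn (fun t => (Y t).sqrt) J :=
    ((hX₁.mul hX₁).superpose I k₁ k₂ lam (hX₂.mul hX₂) hG).sqrt fun t ht => hY_val t ▸ hpos₂ t ht
  have hsol (t : ℝ) (ht : t ∈ J) :
      IsMPSol (deriv F t) (ω t) (Real.exp (-(2 * F t))) (Y t).sqrt := by
    refine isMPSol_sqrt_superpose (x := X₁ t) (y := X₂ t) rfl rfl (hx₁ t ht).ne' (hx₂ t ht).ne'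
      ?_ ?_ (hG t ht) (hY_val t ▸ hpos₂ t ht)
    · have hx₁0 := (hx₁ t ht).ne'
      have hx₂0 := (hx₂ t ht).ne'
      rw [← hI t ht, Real.exp_neg]
      simp only [X₁, X₂]
      field_simp
      ring
    · rw [hlam, div_mul_cancel₀ _ (sub_ne_zero.2 hI4)]
  refine ⟨fun t => (Y t).sqrt.d1, fun t ht => ?_, fun t ht => ?_⟩
  · simpa only [sqrt_val, hY_val] using (hY t ht).1
  · have hxd := (hY t ht).2
    rw [hsol t ht] at hxd
    simpa only [sqrt_val, hY_val] using hxd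

/-- The common time-dependent superposition rule for the Lie family of dissipative
Milne–Pinney equations `ẍ = −F'(t)ẋ + ω²(t)x + e^{−2F(t)}x^{−3}`: if `x₁, x₂` are positive
solutions on an interval `J`, `I` is the constant value of
`e^{2F}(x₁ẋ₂ − x₂ẋ₁)² + (x₁/x₂)² + (x₂/x₁)²`, `I² ≠ 4`,
`λ₁₂ = (k₁k₂I + k₁² + k₂² − 1)/(I² − 4)`, and the expressions under the square roots are
positive on `J`, then `x(t) = √(k₁x₁² + k₂x₂² + 2√(λ₁₂(−(x₁⁴+x₂⁴) + I x₁²x₂²)))` is twice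
differentiable and is again a solution on `J`. -/
theorem mp_superposition_rule (J : Set ℝ) (hJ : J.OrdConnected)
    (F : ℝ → ℝ) (hF : ContDiff ℝ 2 F) (ω : ℝ → ℝ) (hω : ContinuousOn ω J)
    (x₁ x₂ v₁ v₂ : ℝ → ℝ)
    (hx₁ : ∀ t ∈ J, 0 < x₁ t) (hx₂ : ∀ t ∈ J, 0 < x₂ t)
    (hx₁' : ∀ t ∈ J, HasDerivWithinAt x₁ (v₁ t) J t)
    (hx₂' : ∀ t ∈ J, HasDerivWithinAt x₂ (v₂ t) J t)
    (hv₁' : ∀ t ∈ J, HasDerivWithinAt v₁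
      (-(deriv F t) * v₁ t + (ω t) ^ 2 * x₁ t + Real.exp (-(2 * F t)) * ((x₁ t) ^ 3)⁻¹) J t)
    (hv₂' : ∀ t ∈ J, HasDerivWithinAt v₂
      (-(deriv F t) * v₂ t + (ω t) ^ 2 * x₂ t + Real.exp (-(2 * F t)) * ((x₂ t) ^ 3)⁻¹) J t)
    (I : ℝ)
    (hI : ∀ t ∈ J,
      Real.exp (2 * F t) * (x₁ t * v₂ t - x₂ t * v₁ t) ^ 2
        + (x₁ t / x₂ t) ^ 2 + (x₂ t / x₁ t) ^ 2 = I)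
    (k₁ k₂ lam : ℝ) (hI4 : I ^ 2 ≠ 4)
    (hlam : lam = (k₁ * k₂ * I + k₁ ^ 2 + k₂ ^ 2 - 1) / (I ^ 2 - 4))
    (hpos₁ : ∀ t ∈ J,
      0 < lam * (-((x₁ t) ^ 4 + (x₂ t) ^ 4) + I * (x₁ t) ^ 2 * (x₂ t) ^ 2))
    (hpos₂ : ∀ t ∈ J, 0 < mpSupSq k₁ k₂ I lam x₁ x₂ t) :
    ∃ xd : ℝ → ℝ,
      (∀ t ∈ J, HasDerivWithinAt
        (fun s => Real.sqrt (mpSupSq k₁ k₂ I lam x₁ x₂ s)) (xd t) J t)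
      ∧ (∀ t ∈ J, HasDerivWithinAt xd
          (-(deriv F t) * xd t + (ω t) ^ 2 * Real.sqrt (mpSupSq k₁ k₂ I lam x₁ x₂ t)
            + Real.exp (-(2 * F t)) * ((Real.sqrt (mpSupSq k₁ k₂ I lam x₁ x₂ t)) ^ 3)⁻¹)
          J t) :=
  mp_superposition_rule_general J F ω x₁ x₂ v₁ v₂ hx₁ hx₂ hx₁' hx₂' hv₁' hv₂' I hI k₁ k₂ lam hI4
    hlam hpos₁ hpos₂
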